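/- Weighted Euler–Maclaurin with remainder for a ray: Let q ∈ ℂ, let a be an integer, let m > 1 be an integer, set k = ⌊m/2⌋, and let f : ℝ → ℂ be a compactly supported function of class C^m. Then Σ^q_{[a,∞)} f = χ_q^{2k}(∂/∂h) G(h) |_{h=0} + R_m^a(f), where G(h) = ∫_{a−h}^{∞} f(x) dx. -/

import Mathlib

open scoped BigOperators Classical
open MeasureTheory

/-- Coefficients of the Todd power series `Td(S) = S/(1-e^{-S}) = ∑ bernoulli' n · Sⁿ/n!`. -/
noncomputable def toddCoeff (j : ℕ) : ℂ := (bernoulli' j : ℂ) / j.factorial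

/-- Coefficients of the Hirzebruch power series `χ_q(S) = q·Td(S) + (1-q)·Td(-S)`. -/
noncomputable def chiCoeff (q : ℂ) (j : ℕ) : ℂ :=
  q * toddCoeff j + (1 - q) * (-1) ^ j * toddCoeff j

/-- `P_m(x) = B_m({x})/m!`, where `B_m` is the m-th Bernoulli polynomial and `{x}`
is the fractional part of `x`. -/
noncomputable def periodicBernoulli (m : ℕ) (x : ℝ) : ℂ :=
  Polynomial.aeval ((Int.fract x : ℝ) : ℂ) (Polynomial.bernoulli m) / m.factorial

/-- Bernoulli polynomial (mapped to ℂ), shifted to the interval `[n, n+1]`, divided by `m!`. -/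
noncomputable def pbPoly (m : ℕ) (n : ℤ) (x : ℝ) : ℂ :=
  (((Polynomial.bernoulli m).map (algebraMap ℚ ℂ)).eval ((x : ℂ) - n)) / m.factorial

lemma pbPoly_continuous (m : ℕ) (n : ℤ) : Continuous (pbPoly m n) := by
  unfold pbPoly
  exact ((((Polynomial.bernoulli m).map (algebraMap ℚ ℂ)).continuous_aeval).comp
    (Complex.continuous_ofReal.sub continuous_const)).div_const _

lemma pbPoly_hasDerivAt (m : ℕ) (n : ℤ) (x : ℝ) :
    HasDerivAt (pbPoly (m + 1) n) (pbPoly m n x) x := by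
  set Q := (Polynomial.bernoulli (m + 1)).map (algebraMap ℚ ℂ) with hQ
  have hd : HasDerivAt (fun z : ℂ => Q.eval (z - n) / ((m+1).factorial : ℂ))
      ((Polynomial.derivative Q).eval ((x : ℂ) - n) / ((m+1).factorial : ℂ)) (x : ℂ) := by
    have h1 : HasDerivAt (fun z : ℂ => z - n) 1 (x : ℂ) := (hasDerivAt_id _).sub_const _
    have h2 := (Q.hasDerivAt ((x : ℂ) - n)).comp (x : ℂ) h1
    simpa using h2.div_const ((m+1).factorial : ℂ)
  have hval : (Polynomial.derivative Q).eval ((x : ℂ) - n) / ((m+1).factorial : ℂ) = pbPoly m n x := by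
    rw [hQ, Polynomial.derivative_map, Polynomial.derivative_bernoulli_add_one,
      Polynomial.map_mul]
    simp only [Polynomial.map_add, Polynomial.map_natCast, Polynomial.map_one,
      Polynomial.eval_mul, Polynomial.eval_add, Polynomial.eval_natCast, Polynomial.eval_one]
    unfold pbPoly
    have h1 : ((m+1).factorial : ℂ) = ((m:ℂ) + 1) * (m.factorial : ℂ) := by
      rw [Nat.factorial_succ]; push_cast; ring
    have h2 : ((m:ℂ) + 1) ≠ 0 := by
      have := Nat.cast_ne_zero (R := ℂ).mpr (Nat.succ_ne_zero m)
      push_cast at this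
      exact this
    have h3 : (m.factorial : ℂ) ≠ 0 := Nat.cast_ne_zero.mpr m.factorial_ne_zero
    rw [h1]
    field_simp
  have := hd.comp_ofReal
  rw [hval] at this
  exact this

lemma pbPoly_left (m : ℕ) (n : ℤ) : pbPoly m n n = ((bernoulli m : ℚ) : ℂ) / m.factorial := by
  unfold pbPoly
  have h0 : ((n : ℝ) : ℂ) - (n : ℂ) = 0 := by push_cast; ring
  rw [h0, Polynomial.eval_zero_map, Polynomial.bernoulli_eval_zero, eq_ratCast]

lemma pbPoly_right (m : ℕ) (n : ℤ) :
    pbPoly m n ((n : ℝ) + 1) = ((bernoulli' m : ℚ) : ℂ) / m.factorial := by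
  unfold pbPoly
  have h0 : (((n : ℝ) + 1 : ℝ) : ℂ) - (n : ℂ) = 1 := by push_cast; ring
  rw [h0, Polynomial.eval_one_map, Polynomial.bernoulli_eval_one, eq_ratCast]

lemma pbPoly_ibp (m : ℕ) (n : ℤ) (g g' : ℝ → ℂ)
    (hg : ∀ x, HasDerivAt g (g' x) x) (hgc : Continuous g) (hg'c : Continuous g') :
    ∫ x in (n : ℝ)..((n : ℝ) + 1), pbPoly m n x * g x
      = pbPoly (m + 1) n ((n : ℝ) + 1) * g ((n : ℝ) + 1) - pbPoly (m + 1) n n * g n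
        - ∫ x in (n : ℝ)..((n : ℝ) + 1), pbPoly (m + 1) n x * g' x := by
  have h := intervalIntegral.integral_deriv_mul_eq_sub (a := (n : ℝ)) (b := (n : ℝ) + 1)
    (u := pbPoly (m + 1) n) (v := g) (u' := pbPoly m n) (v' := g')
    (fun x _ => pbPoly_hasDerivAt m n x) (fun x _ => hg x)
    ((pbPoly_continuous m n).intervalIntegrable _ _) (hg'c.intervalIntegrable _ _)
  rw [intervalIntegral.integral_add (f := fun x => pbPoly m n x * g x)
    (g := fun x => pbPoly (m + 1) n x * g' x)
    (((pbPoly_continuous m n).mul hgc).intervalIntegrable _ _)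
    (((pbPoly_continuous (m + 1) n).mul hg'c).intervalIntegrable _ _)] at h
  linear_combination h

lemma interval_EM (f : ℝ → ℂ) :
    ∀ m : ℕ, 1 ≤ m → ContDiff ℝ m f → ∀ n : ℤ,
    (-1 : ℂ) ^ (m - 1) * ∫ x in (n : ℝ)..((n : ℝ) + 1), pbPoly m n x * iteratedDeriv m f x
      = (f n + f ((n : ℝ) + 1)) / 2 - (∫ x in (n : ℝ)..((n : ℝ) + 1), f x)
        + ∑ j ∈ Finset.Icc 2 m, ((-1 : ℂ) ^ (j - 1) * (((bernoulli j : ℚ) : ℂ) / j.factorial)) *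
            (iteratedDeriv (j - 1) f ((n : ℝ) + 1) - iteratedDeriv (j - 1) f n) := by
  refine Nat.le_induction ?_ ?_
  · -- base case m = 1
    intro hf n
    have hder : ∀ x, HasDerivAt f (iteratedDeriv 1 f x) x := by
      intro x
      simpa [iteratedDeriv_one] using ((hf.differentiable (by simp)) x).hasDerivAt
    have h := pbPoly_ibp 0 n f (iteratedDeriv 1 f) hder hf.continuous
      (hf.continuous_iteratedDeriv 1 le_rfl)
    have hpb0 : ∀ x : ℝ, pbPoly 0 n x = 1 := by
      intro x
      unfold pbPoly
      simp [Polynomial.bernoulli_zero]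
    have h1 : (∫ x in (n : ℝ)..((n : ℝ) + 1), pbPoly 0 n x * f x)
        = ∫ x in (n : ℝ)..((n : ℝ) + 1), f x := by
      congr 1; funext x; rw [hpb0 x, one_mul]
    rw [h1, pbPoly_left, pbPoly_right] at h
    have hb1 : ((bernoulli 1 : ℚ) : ℂ) = -(1/2) := by norm_num [bernoulli_one]
    have hb1' : ((bernoulli' 1 : ℚ) : ℂ) = 1/2 := by norm_num [bernoulli'_one]
    rw [hb1, hb1'] at h
    rw [show Finset.Icc 2 1 = (∅ : Finset ℕ) from Finset.Icc_eq_empty (by omega)]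
    simp only [Finset.sum_empty, add_zero, Nat.sub_self, pow_zero, one_mul]
    norm_num at h ⊢
    linear_combination h
  · -- inductive step
    intro m hm IH hf n
    obtain ⟨m', rfl⟩ : ∃ m', m = m' + 1 := ⟨m - 1, by omega⟩
    have hg : ∀ x, HasDerivAt (iteratedDeriv (m' + 1) f) (iteratedDeriv (m' + 2) f x) x := by
      intro x
      have hdm := (hf.differentiable_iteratedDeriv (m' + 1)
        (by exact_mod_cast Nat.lt_succ_self (m' + 1))) x
      simpa [iteratedDeriv_succ] using hdm.hasDerivAt
    have h := pbPoly_ibp (m' + 1) n (iteratedDeriv (m' + 1) f) (iteratedDeriv (m' + 2) f) hg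
      (hf.continuous_iteratedDeriv (m' + 1) (by exact_mod_cast Nat.le_succ (m' + 1)))
      (hf.continuous_iteratedDeriv (m' + 2) le_rfl)
    have IH' := IH (hf.of_le (by exact_mod_cast Nat.le_succ (m' + 1))) n
    rw [pbPoly_left, pbPoly_right] at h
    have hbb : ((bernoulli' (m' + 2) : ℚ) : ℂ) = ((bernoulli (m' + 2) : ℚ) : ℂ) := by
      rw [bernoulli_eq_bernoulli'_of_ne_one (by omega)]
    rw [hbb] at h
    rw [Finset.sum_Icc_succ_top (by omega)]
    simp only [Nat.add_sub_cancel] at IH' ⊢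
    linear_combination ((-1 : ℂ) ^ (m' + 1)) * h + IH'

lemma tsupport_iteratedDeriv_subset (f : ℝ → ℂ) (n : ℕ) :
    tsupport (iteratedDeriv n f) ⊆ tsupport f := by
  induction n generalizing f with
  | zero => rw [iteratedDeriv_zero]
  | succ n ih =>
    intro x hx
    rw [iteratedDeriv_succ'] at hx
    exact closure_minimal support_deriv_subset (isClosed_tsupport _) (ih (deriv f) hx)

lemma integral_Ioi_eq_intervalIntegral (g : ℝ → ℂ) (t M : ℝ)
    (h0 : ∀ x, M ≤ x → g x = 0) :
    ∫ x in Set.Ioi t, g x = ∫ x in t..M, g x := by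
  rcases le_or_gt t M with h | h
  · rw [intervalIntegral.integral_of_le h, ← MeasureTheory.integral_indicator measurableSet_Ioi,
      ← MeasureTheory.integral_indicator measurableSet_Ioc]
    congr 1
    funext x
    by_cases hx : x ∈ Set.Ioc t M
    · rw [Set.indicator_of_mem hx, Set.indicator_of_mem (Set.mem_Ioi.mpr hx.1)]
    · rw [Set.indicator_of_notMem hx]
      by_cases hx2 : x ∈ Set.Ioi t
      · rw [Set.indicator_of_mem hx2]
        have hMx : M < x := by
          by_contra hc
          exact hx ⟨hx2, le_of_not_gt hc⟩
        exact h0 x hMx.le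
      · rw [Set.indicator_of_notMem hx2]
  · have z1 : ∫ x in Set.Ioi t, g x = 0 := by
      rw [← MeasureTheory.integral_indicator measurableSet_Ioi]
      have he : Set.indicator (Set.Ioi t) g = fun _ => 0 := by
        funext x
        by_cases hx : x ∈ Set.Ioi t
        · rw [Set.indicator_of_mem hx]; exact h0 x (h.trans hx).le
        · exact Set.indicator_of_notMem hx _
      rw [he, integral_zero]
    have z2 : ∫ x in Set.Ioc M t, g x = 0 := by
      rw [← MeasureTheory.integral_indicator measurableSet_Ioc]
      have he : Set.indicator (Set.Ioc M t) g = fun _ => 0 := by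
        funext x
        by_cases hx : x ∈ Set.Ioc M t
        · rw [Set.indicator_of_mem hx]; exact h0 x hx.1.le
        · exact Set.indicator_of_notMem hx _
      rw [he, integral_zero]
    rw [intervalIntegral.integral_of_ge h.le, z1, z2, neg_zero]

lemma pb_eq_periodic_ae (m : ℕ) (n : ℤ) (g : ℝ → ℂ) :
    (fun x => periodicBernoulli m x * g x)
      =ᵐ[volume.restrict (Set.Ioc (n : ℝ) ((n : ℝ) + 1))] (fun x => pbPoly m n x * g x) := by
  have hres : volume.restrict (Set.Ioc (n : ℝ) ((n : ℝ) + 1))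
      = volume.restrict (Set.Ioo (n : ℝ) ((n : ℝ) + 1)) :=
    (MeasureTheory.Measure.restrict_congr_set MeasureTheory.Ioo_ae_eq_Ioc).symm
  rw [hres]
  refine ((MeasureTheory.ae_restrict_iff' measurableSet_Ioo).mpr (MeasureTheory.ae_of_all _ ?_))
  intro x hx
  have hfl : ⌊x⌋ = n := by
    rw [Int.floor_eq_iff]
    exact ⟨hx.1.le, by exact_mod_cast hx.2⟩
  have hfr : Int.fract x = x - (n : ℝ) := by
    rw [Int.fract, hfl]
  dsimp only
  congr 1
  unfold periodicBernoulli pbPoly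
  rw [hfr]
  congr 1
  rw [Polynomial.aeval_def, Polynomial.eval₂_eq_eval_map]
  congr 1
  push_cast
  ring

lemma periodic_intervalIntegrable (m : ℕ) (n : ℤ) (g : ℝ → ℂ) (hg : Continuous g) :
    IntervalIntegrable (fun x => periodicBernoulli m x * g x) volume (n : ℝ) ((n : ℝ) + 1) := by
  rw [intervalIntegrable_iff_integrableOn_Ioc_of_le (by linarith)]
  exact (((pbPoly_continuous m n).mul hg).integrableOn_Ioc).congr (pb_eq_periodic_ae m n g).symm

lemma periodic_intervalIntegral_eq (m : ℕ) (n : ℤ) (g : ℝ → ℂ) :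
    ∫ x in (n : ℝ)..((n : ℝ) + 1), periodicBernoulli m x * g x
      = ∫ x in (n : ℝ)..((n : ℝ) + 1), pbPoly m n x * g x := by
  rw [intervalIntegral.integral_of_le (by linarith), intervalIntegral.integral_of_le (by linarith)]
  exact MeasureTheory.integral_congr_ae (pb_eq_periodic_ae m n g)

lemma chiCoeff_zero (q : ℂ) : chiCoeff q 0 = 1 := by
  unfold chiCoeff toddCoeff
  norm_num

lemma chiCoeff_one (q : ℂ) : chiCoeff q 1 = q - 1/2 := by
  unfold chiCoeff toddCoeff
  rw [bernoulli'_one]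
  push_cast
  norm_num
  ring

lemma chiCoeff_mul (q : ℂ) (j : ℕ) (hj : 2 ≤ j) (w : ℂ) :
    chiCoeff q j * ((-1 : ℂ) ^ (j - 1) * w) = -(((bernoulli j : ℚ) : ℂ) / j.factorial * w) := by
  obtain ⟨i, rfl⟩ : ∃ i, j = i + 2 := ⟨j - 2, by omega⟩
  unfold chiCoeff toddCoeff
  rcases Nat.even_or_odd (i + 2) with he | ho
  · have h1 : ((-1 : ℂ)) ^ (i + 2) = 1 := he.neg_one_pow
    have h2 : ((-1 : ℂ)) ^ (i + 2 - 1) = -1 := by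
      have : Odd (i + 2 - 1) := by
        rcases he with ⟨r, hr⟩
        exact ⟨r - 1, by omega⟩
      exact this.neg_one_pow
    have h3 : (bernoulli (i + 2) : ℂ) = (bernoulli' (i + 2) : ℂ) := by
      exact_mod_cast congrArg (fun x : ℚ => (x : ℂ)) (bernoulli_eq_bernoulli'_of_ne_one (by omega))
    rw [h1, h2, h3]
    ring
  · have h1 : bernoulli' (i + 2) = 0 := bernoulli'_eq_zero_of_odd ho (by omega)
    have h2 : bernoulli (i + 2) = 0 := by
      rw [bernoulli_eq_bernoulli'_of_ne_one (by omega), h1]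
    rw [h1, h2]
    push_cast
    ring

lemma coeff_sum_eq (m : ℕ) (w : ℕ → ℂ) :
    ∑ j ∈ Finset.Icc 2 m,
        ((-1 : ℂ) ^ (j - 1) * (((bernoulli j : ℚ) : ℂ) / j.factorial)) * w j
      = -∑ j ∈ Finset.Icc 2 m, (((bernoulli j : ℚ) : ℂ) / j.factorial) * w j := by
  rw [← Finset.sum_neg_distrib]
  refine Finset.sum_congr rfl fun j hj => ?_
  have hj2 : 2 ≤ j := (Finset.mem_Icc.mp hj).1
  rcases Nat.even_or_odd j with he | ho
  · have h2 : ((-1 : ℂ)) ^ (j - 1) = -1 := by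
      have : Odd (j - 1) := by
        rcases he with ⟨r, hr⟩
        exact ⟨r - 1, by omega⟩
      exact this.neg_one_pow
    rw [h2]; ring
  · have h1 : bernoulli j = 0 := by
      rw [bernoulli_eq_bernoulli'_of_ne_one (by omega)]
      exact bernoulli'_eq_zero_of_odd ho (by omega)
    rw [h1]
    push_cast
    ring

lemma sum_Icc_to_even (m : ℕ) (hm : 2 ≤ m) (w : ℕ → ℂ) :
    ∑ j ∈ Finset.Icc 2 m, (((bernoulli j : ℚ) : ℂ) / j.factorial) * w j
      = ∑ j ∈ Finset.Icc 2 (2 * (m / 2)), (((bernoulli j : ℚ) : ℂ) / j.factorial) * w j := by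
  rcases Nat.even_or_odd m with he | ho
  · obtain ⟨r, hr⟩ := he
    have h1 : 2 * (m / 2) = m := by omega
    rw [h1]
  · obtain ⟨k, hk⟩ := ho
    have hdiv : m / 2 = k := by omega
    have h2 : bernoulli (2 * k + 1) = 0 := by
      rw [bernoulli_eq_bernoulli'_of_ne_one (by omega)]
      exact bernoulli'_eq_zero_of_odd ⟨k, by omega⟩ (by omega)
    rw [hdiv, hk, Finset.sum_Icc_succ_top (by omega), h2]
    push_cast
    ring

lemma coeff_sum_eq₂ (m : ℕ) (w : ℕ → ℂ) :
    ∑ j ∈ Finset.Icc 2 m,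
        ((-1 : ℂ) ^ (j - 1) * (((bernoulli j : ℚ) : ℂ) / j.factorial)) * (0 - w j)
      = ∑ j ∈ Finset.Icc 2 m, (((bernoulli j : ℚ) : ℂ) / j.factorial) * w j := by
  refine Finset.sum_congr rfl fun j hj => ?_
  have hj2 : 2 ≤ j := (Finset.mem_Icc.mp hj).1
  rcases Nat.even_or_odd j with he | ho
  · have h2 : ((-1 : ℂ)) ^ (j - 1) = -1 := by
      have : Odd (j - 1) := by
        rcases he with ⟨r, hr⟩
        exact ⟨r - 1, by omega⟩
      exact this.neg_one_pow
    rw [h2]; ring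
  · have h1 : bernoulli j = 0 := by
      rw [bernoulli_eq_bernoulli'_of_ne_one (by omega)]
      exact bernoulli'_eq_zero_of_odd ho (by omega)
    rw [h1]
    push_cast
    ring

lemma G_hasDerivAt (f : ℝ → ℂ) (hf : Continuous f) (M : ℝ) (h : ℝ) (a : ℝ) :
    HasDerivAt (fun h : ℝ => ∫ x in (a - h)..M, f x) (f (a - h)) h := by
  have h1 : HasDerivAt (fun t => ∫ x in t..M, f x) (-f (a - h)) (a - h) :=
    intervalIntegral.integral_hasDerivAt_left (hf.intervalIntegrable _ _)
      (hf.stronglyMeasurableAtFilter _ _) hf.continuousAt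
  have h2 : HasDerivAt (fun s : ℝ => a - s) (-1) h := by
    simpa using (hasDerivAt_id h).const_sub a
  have h3 := h1.scomp h h2
  rw [show ((-1:ℝ) • -f (a - h)) = f (a - h) by simp] at h3
  exact h3

lemma iteratedDeriv_sub_arg (f : ℝ → ℂ) (a : ℝ) (j : ℕ) :
    iteratedDeriv j (fun h : ℝ => f (a - h)) 0 = (-1 : ℂ) ^ j * iteratedDeriv j f a := by
  have h2 : iteratedDeriv j (fun h : ℝ => f (a - h)) 0 = (-1 : ℝ) ^ j • iteratedDeriv j f a := by
    simpa [sub_eq_add_neg, iteratedDeriv_comp_const_add] using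
      iteratedDeriv_comp_neg j (fun y : ℝ => f (a + y)) 0
  rw [h2, Complex.real_smul]
  push_cast
  ring

/-- **Weighted Euler–Maclaurin with remainder for a ray.**
For `q ∈ ℂ`, an integer `a`, an integer `m > 1`, `k = ⌊m/2⌋` and a compactly supported
`f : ℝ → ℂ` of class `C^m`,
`Σ^q_{[a,∞)} f = χ_q^{2k}(∂/∂h) ∫_{a-h}^{∞} f |_{h=0} + R_m^a(f)`. -/
theorem weighted_euler_maclaurin_ray
    (q : ℂ) (a : ℤ) (m : ℕ) (hm : 1 < m)
    (f : ℝ → ℂ) (hf : ContDiff ℝ m f) (hsupp : HasCompactSupport f) :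
    q * f a + (∑' n : ℕ, f ((a : ℝ) + 1 + n)) =
      (∑ j ∈ Finset.range (2 * (m / 2) + 1),
        chiCoeff q j *
          iteratedDeriv j (fun h : ℝ => ∫ x in Set.Ioi ((a : ℝ) - h), f x) 0)
      + (-1 : ℂ) ^ (m - 1) *
          ∫ x in Set.Ioi (a : ℝ), periodicBernoulli m x * iteratedDeriv m f x := by
  classical
  have hfc : Continuous f := hf.continuous
  obtain ⟨r, hr'⟩ := hsupp.bddAbove
  have hr : ∀ x ∈ tsupport f, x ≤ r := fun x hx => hr' hx
  set K : ℕ := ⌈r - (a : ℝ)⌉₊ + 1 with hKdef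
  have haK : r < (a : ℝ) + K := by
    have h1 := Nat.le_ceil (r - (a : ℝ))
    have h2 : ((⌈r - (a : ℝ)⌉₊ : ℝ)) + 1 = (K : ℝ) := by rw [hKdef]; push_cast; ring
    linarith
  have hzero : ∀ (j : ℕ) (x : ℝ), (a : ℝ) + K ≤ x → iteratedDeriv j f x = 0 := by
    intro j x hx
    apply image_eq_zero_of_notMem_tsupport
    intro hmem
    have h1 := hr x (tsupport_iteratedDeriv_subset f j hmem)
    linarith
  have hzero0 : ∀ x : ℝ, (a : ℝ) + K ≤ x → f x = 0 := by
    intro x hx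
    have := hzero 0 x hx
    rwa [iteratedDeriv_zero] at this
  set M : ℝ := (a : ℝ) + K with hMdef
  set G : ℝ → ℂ := fun h : ℝ => ∫ x in Set.Ioi ((a : ℝ) - h), f x with hGdef
  -- G and its derivatives
  have hGeq : G = fun h : ℝ => ∫ x in ((a : ℝ) - h)..M, f x := by
    funext h
    exact integral_Ioi_eq_intervalIntegral f _ M hzero0
  have hGderiv : deriv G = fun h : ℝ => f ((a : ℝ) - h) := by
    funext h
    rw [hGeq]
    exact (G_hasDerivAt f hfc M h (a : ℝ)).deriv
  have hGj' : ∀ j : ℕ, 1 ≤ j →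
      iteratedDeriv j G 0 = (-1 : ℂ) ^ (j - 1) * iteratedDeriv (j - 1) f (a : ℝ) := by
    intro j hj
    obtain ⟨i, rfl⟩ : ∃ i, j = i + 1 := ⟨j - 1, by omega⟩
    simp only [Nat.add_sub_cancel]
    rw [iteratedDeriv_succ', hGderiv, iteratedDeriv_sub_arg]
  have hG0 : G 0 = ∫ x in Set.Ioi (a : ℝ), f x := by
    rw [hGdef]
    show (∫ x in Set.Ioi ((a : ℝ) - 0), f x) = _
    rw [sub_zero]
  -- the chi sum
  have hk2 : 2 ≤ 2 * (m / 2) := by omega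
  set k2 := 2 * (m / 2) with hk2def
  have hS : (∑ j ∈ Finset.range (k2 + 1), chiCoeff q j * iteratedDeriv j G 0)
      = (∫ x in Set.Ioi (a : ℝ), f x) + (q - 1/2) * f ((a : ℝ))
        - ∑ j ∈ Finset.Icc 2 k2,
            (((bernoulli j : ℚ) : ℂ) / j.factorial) * iteratedDeriv (j - 1) f ((a : ℝ)) := by
    rw [Finset.range_eq_Ico, Finset.sum_eq_sum_Ico_succ_bot (by omega),
      Finset.sum_eq_sum_Ico_succ_bot (by omega),
      show (0 : ℕ) + 1 = 1 from rfl, show (1 : ℕ) + 1 = 2 from rfl, Finset.Ico_add_one_right_eq_Icc]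
    have hrest : ∑ j ∈ Finset.Icc 2 k2, chiCoeff q j * iteratedDeriv j G 0
        = -∑ j ∈ Finset.Icc 2 k2,
            (((bernoulli j : ℚ) : ℂ) / j.factorial) * iteratedDeriv (j - 1) f ((a : ℝ)) := by
      rw [← Finset.sum_neg_distrib]
      refine Finset.sum_congr rfl fun j hj => ?_
      have hj2 : 2 ≤ j := (Finset.mem_Icc.mp hj).1
      rw [hGj' j (by omega), chiCoeff_mul q j hj2]
    rw [hrest, chiCoeff_zero, chiCoeff_one, iteratedDeriv_zero, hG0, hGj' 1 le_rfl]
    simp only [Nat.sub_self, pow_zero, iteratedDeriv_zero]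
    ring
  -- the Euler-Maclaurin part
  have hmm : 1 ≤ m := by omega
  have hgm : Continuous (iteratedDeriv m f) := hf.continuous_iteratedDeriv m le_rfl
  have hFzero : ∀ x : ℝ, M ≤ x → periodicBernoulli m x * iteratedDeriv m f x = 0 := by
    intro x hx
    rw [hzero m x hx, mul_zero]
  have e1 : ∀ i : ℕ, ((a + (i : ℤ) : ℤ) : ℝ) = (a : ℝ) + (i : ℕ) := by
    intro i; push_cast; ring
  have e2 : ∀ i : ℕ, ((a + (i : ℤ) : ℤ) : ℝ) + 1 = (a : ℝ) + ((i + 1 : ℕ) : ℝ) := by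
    intro i; push_cast; ring
  have hFi : ∀ i : ℕ, IntervalIntegrable
      (fun x => periodicBernoulli m x * iteratedDeriv m f x) volume
      ((a : ℝ) + (i : ℕ)) ((a : ℝ) + ((i + 1 : ℕ) : ℝ)) := by
    intro i
    have h1 := periodic_intervalIntegrable m (a + (i : ℤ)) (iteratedDeriv m f) hgm
    rw [e2 i, e1 i] at h1
    exact h1
  have hfi : ∀ i : ℕ, IntervalIntegrable f volume
      ((a : ℝ) + (i : ℕ)) ((a : ℝ) + ((i + 1 : ℕ) : ℝ)) :=
    fun i => hfc.intervalIntegrable _ _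
  have hFIoi : ∫ x in Set.Ioi (a : ℝ), periodicBernoulli m x * iteratedDeriv m f x
      = ∑ i ∈ Finset.range K, ∫ x in ((a : ℝ) + (i : ℕ))..((a : ℝ) + ((i + 1 : ℕ) : ℝ)),
          periodicBernoulli m x * iteratedDeriv m f x := by
    rw [integral_Ioi_eq_intervalIntegral _ (a : ℝ) M hFzero]
    have h1 := intervalIntegral.sum_integral_adjacent_intervals
      (f := fun x => periodicBernoulli m x * iteratedDeriv m f x) (μ := volume)
      (a := fun i : ℕ => (a : ℝ) + (i : ℕ)) (n := K) (fun k _ => hFi k)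
    rw [h1]
    norm_num [hMdef]
  have hfIoi : ∫ x in Set.Ioi (a : ℝ), f x
      = ∑ i ∈ Finset.range K, ∫ x in ((a : ℝ) + (i : ℕ))..((a : ℝ) + ((i + 1 : ℕ) : ℝ)), f x := by
    rw [integral_Ioi_eq_intervalIntegral f (a : ℝ) M hzero0]
    have h1 := intervalIntegral.sum_integral_adjacent_intervals
      (f := f) (μ := volume)
      (a := fun i : ℕ => (a : ℝ) + (i : ℕ)) (n := K) (fun k _ => hfi k)
    rw [h1]
    norm_num [hMdef]
  have hEMi : ∀ i : ℕ,
      (-1 : ℂ) ^ (m - 1) * ∫ x in ((a : ℝ) + (i : ℕ))..((a : ℝ) + ((i + 1 : ℕ) : ℝ)),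
          periodicBernoulli m x * iteratedDeriv m f x
        = (f ((a : ℝ) + (i : ℕ)) + f ((a : ℝ) + ((i + 1 : ℕ) : ℝ))) / 2
          - (∫ x in ((a : ℝ) + (i : ℕ))..((a : ℝ) + ((i + 1 : ℕ) : ℝ)), f x)
          + ∑ j ∈ Finset.Icc 2 m, ((-1 : ℂ) ^ (j - 1) * (((bernoulli j : ℚ) : ℂ) / j.factorial)) *
              (iteratedDeriv (j - 1) f ((a : ℝ) + ((i + 1 : ℕ) : ℝ))
                - iteratedDeriv (j - 1) f ((a : ℝ) + (i : ℕ))) := by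
    intro i
    have h1 := interval_EM f m hmm hf (a + (i : ℤ))
    rw [← periodic_intervalIntegral_eq m (a + (i : ℤ)) (iteratedDeriv m f)] at h1
    rw [e2 i, e1 i] at h1
    exact h1
  have hsumEM : (-1 : ℂ) ^ (m - 1) *
      (∫ x in Set.Ioi (a : ℝ), periodicBernoulli m x * iteratedDeriv m f x)
      = ∑ i ∈ Finset.range K,
          ((f ((a : ℝ) + (i : ℕ)) + f ((a : ℝ) + ((i + 1 : ℕ) : ℝ))) / 2
          - (∫ x in ((a : ℝ) + (i : ℕ))..((a : ℝ) + ((i + 1 : ℕ) : ℝ)), f x)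
          + ∑ j ∈ Finset.Icc 2 m, ((-1 : ℂ) ^ (j - 1) * (((bernoulli j : ℚ) : ℂ) / j.factorial)) *
              (iteratedDeriv (j - 1) f ((a : ℝ) + ((i + 1 : ℕ) : ℝ))
                - iteratedDeriv (j - 1) f ((a : ℝ) + (i : ℕ)))) := by
    rw [hFIoi, Finset.mul_sum]
    exact Finset.sum_congr rfl fun i _ => hEMi i
  have hfK0 : f ((a : ℝ) + (K : ℕ)) = 0 := hzero0 _ (le_of_eq hMdef)
  have hvK : ∀ j : ℕ, iteratedDeriv j f ((a : ℝ) + (K : ℕ)) = 0 :=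
    fun j => hzero j _ (le_of_eq hMdef)
  have ha0 : ((a : ℝ) + ((0 : ℕ) : ℝ)) = (a : ℝ) := by norm_num
  -- sum A
  have hAA : ∑ i ∈ Finset.range K, (f ((a : ℝ) + (i : ℕ)) + f ((a : ℝ) + ((i + 1 : ℕ) : ℝ))) / 2
      = (∑ i ∈ Finset.range K, f ((a : ℝ) + (i : ℕ)))
        + (f ((a : ℝ) + (K : ℕ)) - f ((a : ℝ) + ((0 : ℕ) : ℝ))) / 2 := by
    have h0 : ∑ i ∈ Finset.range K,
        (f ((a : ℝ) + ((i + 1 : ℕ) : ℝ)) - f ((a : ℝ) + (i : ℕ)))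
        = f ((a : ℝ) + (K : ℕ)) - f ((a : ℝ) + ((0 : ℕ) : ℝ)) :=
      Finset.sum_range_sub (fun i : ℕ => f ((a : ℝ) + (i : ℕ))) K
    have h1 : ∀ i ∈ Finset.range K,
        (f ((a : ℝ) + (i : ℕ)) + f ((a : ℝ) + ((i + 1 : ℕ) : ℝ))) / 2
          = f ((a : ℝ) + (i : ℕ))
            + (f ((a : ℝ) + ((i + 1 : ℕ) : ℝ)) - f ((a : ℝ) + (i : ℕ))) / 2 :=
      fun i _ => by ring
    rw [Finset.sum_congr rfl h1, Finset.sum_add_distrib, ← Finset.sum_div, h0]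
  -- sum C
  have hCC : ∑ i ∈ Finset.range K, ∑ j ∈ Finset.Icc 2 m,
        ((-1 : ℂ) ^ (j - 1) * (((bernoulli j : ℚ) : ℂ) / j.factorial)) *
          (iteratedDeriv (j - 1) f ((a : ℝ) + ((i + 1 : ℕ) : ℝ))
            - iteratedDeriv (j - 1) f ((a : ℝ) + (i : ℕ)))
      = ∑ j ∈ Finset.Icc 2 k2,
          (((bernoulli j : ℚ) : ℂ) / j.factorial) * iteratedDeriv (j - 1) f ((a : ℝ)) := by
    rw [Finset.sum_comm]
    have h1 : ∀ j ∈ Finset.Icc 2 m, ∑ i ∈ Finset.range K,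
        ((-1 : ℂ) ^ (j - 1) * (((bernoulli j : ℚ) : ℂ) / j.factorial)) *
          (iteratedDeriv (j - 1) f ((a : ℝ) + ((i + 1 : ℕ) : ℝ))
            - iteratedDeriv (j - 1) f ((a : ℝ) + (i : ℕ)))
        = ((-1 : ℂ) ^ (j - 1) * (((bernoulli j : ℚ) : ℂ) / j.factorial)) *
            (0 - iteratedDeriv (j - 1) f ((a : ℝ))) := by
      intro j _
      rw [← Finset.mul_sum]
      have h2 : ∑ i ∈ Finset.range K,
          (iteratedDeriv (j - 1) f ((a : ℝ) + ((i + 1 : ℕ) : ℝ))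
            - iteratedDeriv (j - 1) f ((a : ℝ) + (i : ℕ)))
          = iteratedDeriv (j - 1) f ((a : ℝ) + (K : ℕ))
            - iteratedDeriv (j - 1) f ((a : ℝ) + ((0 : ℕ) : ℝ)) :=
        Finset.sum_range_sub (fun i : ℕ => iteratedDeriv (j - 1) f ((a : ℝ) + (i : ℕ))) K
      rw [h2, hvK (j - 1), ha0]
    rw [Finset.sum_congr rfl h1,
      coeff_sum_eq₂ m (fun j => iteratedDeriv (j - 1) f ((a : ℝ))),
      sum_Icc_to_even m (by omega) (fun j => iteratedDeriv (j - 1) f ((a : ℝ)))]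
  -- final EM identity
  have hE1 : (-1 : ℂ) ^ (m - 1) *
      (∫ x in Set.Ioi (a : ℝ), periodicBernoulli m x * iteratedDeriv m f x)
      = (∑ i ∈ Finset.range K, f ((a : ℝ) + (i : ℕ))) - f ((a : ℝ)) / 2
        - (∫ x in Set.Ioi (a : ℝ), f x)
        + ∑ j ∈ Finset.Icc 2 k2,
            (((bernoulli j : ℚ) : ℂ) / j.factorial) * iteratedDeriv (j - 1) f ((a : ℝ)) := by
    rw [hsumEM, Finset.sum_add_distrib, Finset.sum_sub_distrib, ← hfIoi, hAA, hCC, hfK0, ha0]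
    ring
  -- the tsum
  have hT : (∑' n : ℕ, f ((a : ℝ) + 1 + (n : ℕ)))
      = (∑ i ∈ Finset.range K, f ((a : ℝ) + (i : ℕ))) - f ((a : ℝ)) := by
    have h1 : ∀ n ∉ Finset.range K, f ((a : ℝ) + 1 + (n : ℕ)) = 0 := by
      intro n hn
      have hKn : K ≤ n := by simpa using hn
      apply hzero0
      rw [hMdef]
      have : (K : ℝ) ≤ (n : ℝ) := by exact_mod_cast hKn
      linarith
    rw [tsum_eq_sum h1]
    have h2 := Finset.sum_range_succ' (fun i : ℕ => f ((a : ℝ) + (i : ℕ))) K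
    have h3 := Finset.sum_range_succ (fun i : ℕ => f ((a : ℝ) + (i : ℕ))) K
    beta_reduce at h2 h3
    rw [ha0] at h2
    rw [hfK0] at h3
    have h4 : ∀ i ∈ Finset.range K, f ((a : ℝ) + 1 + (i : ℕ)) = f ((a : ℝ) + ((i + 1 : ℕ) : ℝ)) := by
      intro i _
      congr 1
      push_cast
      ring
    rw [Finset.sum_congr rfl h4]
    linear_combination h3 - h2
  linear_combination hT - hS - hE1
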